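/- arXiv:1205.2116 — 4 statements merged into one kernel-verified Lean document; each statement's English description precedes it below -/
import Mathlib

section
/- Let R be a Noetherian ring and let Q and P be prime ideals of R such that there is a link Q ⇝ P. Let B be the intersection of all ideals A of R such that there is a link Q ⇝ P via A. Then there is a link Q ⇝ P via B, and B is the unique minimal linking ideal: every ideal A of R such that there is a link Q ⇝ P via A contains B. -/
variable {R : Type*}

/-- The image of a two-sided ideal under a ring automorphism `σ`
(an element is in `σ(I)` iff its preimage under `σ` is in `I`). -/
def TwoSidedIdeal.mapEquiv [Ring R] (σ : R ≃+* R) (I : TwoSidedIdeal R) : TwoSidedIdeal R :=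
  I.comap (σ.symm : R ≃+* R)

/-- A two-sided ideal `P ⊊ R` is prime: whenever `a R b ⊆ P`, either `a ∈ P` or `b ∈ P`. -/
def TwoSidedIdeal.IsPrime [Ring R] (P : TwoSidedIdeal R) : Prop :=
  P ≠ ⊤ ∧ ∀ a b : R, (∀ r : R, a * r * b ∈ P) → a ∈ P ∨ b ∈ P

/-- `g` is regular modulo `P`, i.e. the image of `g` in `R/P` is a non-zero-divisor. -/
def RegularMod [Ring R] (P : TwoSidedIdeal R) (g : R) : Prop :=
  (∀ r : R, g * r ∈ P → r ∈ P) ∧ (∀ r : R, r * g ∈ P → r ∈ P)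

/-- There is a link `Q ⇝ P` via the ideal `A`: `Q·P ⊆ A ⊊ Q ∩ P` and `(Q ∩ P)/A` is
torsionfree as a right `R/P`-module and as a left `R/Q`-module. -/
def LinkVia [Ring R] (Q P A : TwoSidedIdeal R) : Prop :=
  (∀ q ∈ Q, ∀ p ∈ P, q * p ∈ A) ∧ A < Q ⊓ P ∧
  ∀ f ∈ Q ⊓ P, f ∉ A →
    (∀ g : R, RegularMod P g → f * g ∉ A) ∧
    (∀ g : R, RegularMod Q g → g * f ∉ A)

/-- if `Q ⇝ P` is a link of prime ideals of a Noetherian ring, then the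
intersection `B` of all linking ideals is itself a linking ideal, and it is the unique
minimal linking ideal. -/
theorem unique_minimal_linking_ideal [Ring R] [IsNoetherianRing R] [IsNoetherianRing Rᵐᵒᵖ]
    (Q P : TwoSidedIdeal R) (hQ : Q.IsPrime) (hP : P.IsPrime)
    (hlink : ∃ A : TwoSidedIdeal R, LinkVia Q P A)
    (B : TwoSidedIdeal R) (hB : B = sInf {A : TwoSidedIdeal R | LinkVia Q P A}) :
    LinkVia Q P B ∧ ∀ A : TwoSidedIdeal R, LinkVia Q P A → B ≤ A := by
  subst hB
  have hmin : ∀ A : TwoSidedIdeal R, LinkVia Q P A →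
      sInf {A : TwoSidedIdeal R | LinkVia Q P A} ≤ A := fun A hA => sInf_le hA
  refine ⟨⟨?_, ?_, ?_⟩, hmin⟩
  · intro q hq p hp
    rw [TwoSidedIdeal.mem_sInf]
    exact fun A hA => hA.1 q hq p hp
  · obtain ⟨A, hA⟩ := hlink
    exact lt_of_le_of_lt (hmin A hA) hA.2.1
  · intro f hf hfB
    rw [TwoSidedIdeal.mem_sInf] at hfB
    push_neg at hfB
    obtain ⟨A, hA, hfA⟩ := hfB
    refine ⟨fun g hg hc => (hA.2.2 f hf hfA).1 g hg ((hmin A hA) hc),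
      fun g hg hc => (hA.2.2 f hf hfA).2 g hg ((hmin A hA) hc)⟩
end

section
/- Let R be a Noetherian ring, let Q and P be prime ideals of R, and let A be an ideal of R such that there is a link Q ⇝ P via A (so in particular Q·P ⊆ A ⊆ Q ∩ P). Then every prime ideal of R that is minimal over A is equal to Q or to P; in particular, R has at most two prime ideals minimal over A. -/
variable {R : Type*}

/-- if `Q ⇝ P` is a link via `A` in a Noetherian ring, then every prime ideal
minimal over `A` equals `Q` or `P`; in particular there are at most two such primes. -/
theorem minimal_primes_over_linking_ideal [Ring R] [IsNoetherianRing R] [IsNoetherianRing Rᵐᵒᵖ]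
    (Q P A : TwoSidedIdeal R) (hQ : Q.IsPrime) (hP : P.IsPrime) (h : LinkVia Q P A) :
    ∀ M : TwoSidedIdeal R, M.IsPrime → A ≤ M →
      (∀ M' : TwoSidedIdeal R, M'.IsPrime → A ≤ M' → M' ≤ M → M' = M) →
      M = Q ∨ M = P := by
  intro M hM hAM hmin
  have hA : A ≤ Q ⊓ P := le_of_lt h.2.1
  by_cases hQM : Q ≤ M
  · exact Or.inl ((hmin Q hQ (hA.trans inf_le_left) hQM).symm)
  · right
    obtain ⟨q, hqQ, hqM⟩ := SetLike.not_le_iff_exists.mp hQM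
    have hPM : P ≤ M := by
      intro p hp
      rcases hM.2 q p (fun r => hAM (h.1 _ (Q.mul_mem_right q r hqQ) p hp)) with h1 | h2
      · exact absurd h1 hqM
      · exact h2
    exact (hmin P hP (hA.trans inf_le_right) hPM).symm
end

section
/- Let R be a Noetherian ring with a ring automorphism σ, let Q and P be prime ideals of R, and let A be an ideal of R such that there is a link Q ⇝ P via A. Suppose n ≥ 1 is an integer with σⁿ(Q) = Q, σⁿ(P) = P, and σⁿ(A) = A, and set Q⁰ = ⋂_{i=0}^{n-1} σⁱ(Q), P⁰ = ⋂_{i=0}^{n-1} σⁱ(P), A⁰ = ⋂_{i=0}^{n-1} σⁱ(A). Then for every f ∈ Q⁰ ∩ P⁰ with f ∉ A⁰ the following hold: for every g ∈ R whose image in R/P⁰ is a non-zero-divisor, f·g ∉ A⁰; and for every g ∈ R whose image in R/Q⁰ is a non-zero-divisor, g·f ∉ A⁰. That is, (Q⁰ ∩ P⁰)/A⁰ is torsionfree as a right R/P⁰-module and as a left R/Q⁰-module. -/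
variable {R : Type*}

section Aux

variable [Ring R]

lemma aux_mem_mapEquiv {σ : R ≃+* R} {I : TwoSidedIdeal R} {x : R} :
    x ∈ TwoSidedIdeal.mapEquiv σ I ↔ σ.symm x ∈ I :=
  TwoSidedIdeal.mem_comap _

lemma aux_mapEquiv_mono (σ : R ≃+* R) {I J : TwoSidedIdeal R} (h : I ≤ J) :
    TwoSidedIdeal.mapEquiv σ I ≤ TwoSidedIdeal.mapEquiv σ J := fun x hx =>
  aux_mem_mapEquiv.2 (h (aux_mem_mapEquiv.1 hx))

lemma aux_symm_pow_add (σ : R ≃+* R) (a b : ℕ) (x : R) :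
    (σ ^ (a + b)).symm x = (σ ^ b).symm ((σ ^ a).symm x) := by
  rw [pow_add]; rfl

lemma aux_mapEquiv_comp (σ : R ≃+* R) (a b : ℕ) (I : TwoSidedIdeal R) :
    TwoSidedIdeal.mapEquiv (σ ^ a) (TwoSidedIdeal.mapEquiv (σ ^ b) I)
      = TwoSidedIdeal.mapEquiv (σ ^ (a + b)) I := by
  refine SetLike.ext fun x => ?_
  rw [aux_mem_mapEquiv, aux_mem_mapEquiv, aux_mem_mapEquiv, aux_symm_pow_add]

lemma aux_mapEquiv_one (σ : R ≃+* R) (I : TwoSidedIdeal R) :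
    TwoSidedIdeal.mapEquiv (σ ^ 0) I = I := by
  refine SetLike.ext fun x => ?_
  rw [aux_mem_mapEquiv]
  simp only [pow_zero]
  exact Iff.of_eq (congrArg (· ∈ I) (rfl : (RingEquiv.symm (1 : R ≃+* R)) x = x))

lemma aux_fix_mul (σ : R ≃+* R) (n : ℕ) (I : TwoSidedIdeal R)
    (h : TwoSidedIdeal.mapEquiv (σ ^ n) I = I) (k : ℕ) :
    TwoSidedIdeal.mapEquiv (σ ^ (n * k)) I = I := by
  induction k with
  | zero => rw [Nat.mul_zero, aux_mapEquiv_one]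
  | succ m ih =>
      rw [show n * (m + 1) = n + n * m by ring, ← aux_mapEquiv_comp, ih, h]

lemma aux_prime_mapEquiv (σ : R ≃+* R) {P : TwoSidedIdeal R} (hP : P.IsPrime) :
    (TwoSidedIdeal.mapEquiv σ P).IsPrime := by
  constructor
  · intro htop
    refine hP.1 (P.eq_top ?_)
    have h1 : (1 : R) ∈ TwoSidedIdeal.mapEquiv σ P := htop ▸ trivial
    simpa using aux_mem_mapEquiv.1 h1
  · intro a b hab
    have : ∀ r : R, σ.symm a * r * σ.symm b ∈ P := by
      intro r
      have := hab (σ r)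
      rw [aux_mem_mapEquiv] at this
      simpa using this
    rcases hP.2 _ _ this with h | h
    · exact Or.inl (aux_mem_mapEquiv.2 h)
    · exact Or.inr (aux_mem_mapEquiv.2 h)

/-- If `X ≤ σᵈ(X)` and `σ^{nd}(X) = X` with `n ≥ 1`, then `σᵈ(X) = X`. -/
lemma aux_chain (σ : R ≃+* R) (d n : ℕ) (hn : 1 ≤ n) (X : TwoSidedIdeal R)
    (hfix : TwoSidedIdeal.mapEquiv (σ ^ (n * d)) X = X)
    (hle : X ≤ TwoSidedIdeal.mapEquiv (σ ^ d) X) :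
    TwoSidedIdeal.mapEquiv (σ ^ d) X = X := by
  have step : ∀ k : ℕ, TwoSidedIdeal.mapEquiv (σ ^ (k * d)) X
      ≤ TwoSidedIdeal.mapEquiv (σ ^ ((k + 1) * d)) X := by
    intro k
    have := aux_mapEquiv_mono (σ ^ (k * d)) hle
    rw [aux_mapEquiv_comp] at this
    have harith : k * d + d = (k + 1) * d := by ring
    rwa [harith] at this
  have chain : ∀ k : ℕ, TwoSidedIdeal.mapEquiv (σ ^ (1 * d)) X
      ≤ TwoSidedIdeal.mapEquiv (σ ^ ((k + 1) * d)) X := by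
    intro k
    induction k with
    | zero => exact le_rfl
    | succ m ih => exact ih.trans (step (m + 1))
  obtain ⟨m, rfl⟩ : ∃ m, n = m + 1 := ⟨n - 1, (Nat.succ_pred_eq_of_pos hn).symm⟩
  have h1 := chain m
  rw [one_mul, show (m + 1) * d = (m + 1) * d from rfl, Nat.mul_comm (m + 1) d] at h1
  rw [Nat.mul_comm (m + 1) d] at hfix
  rw [hfix] at h1
  exact le_antisymm h1 hle

/-- In a prime `F i` avoiding all the other comparable-only-if-equal primes `F j`,
we can find `c ∉ F i` lying in every `F j ≠ F i`. -/
lemma aux_exists_elt (F : ℕ → TwoSidedIdeal R) (i : ℕ) (hFi : (F i).IsPrime)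
    (s : Finset ℕ) (hcomp : ∀ j ∈ s, F j ≤ F i → F j = F i) :
    ∃ c, c ∉ F i ∧ ∀ j ∈ s, F j ≠ F i → c ∈ F j := by
  induction s using Finset.induction with
  | empty => exact ⟨1, fun h1 => hFi.1 ((F i).eq_top h1), by simp⟩
  | @insert a s ha ih =>
      obtain ⟨c, hc, hcs⟩ := ih fun j hj => hcomp j (Finset.mem_insert_of_mem hj)
      by_cases hEq : F a = F i
      · exact ⟨c, hc, fun j hj hne => by
          rcases Finset.mem_insert.1 hj with rfl | hj
          · exact absurd hEq hne
          · exact hcs j hj hne⟩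
      · have hnotle : ¬ F a ≤ F i := fun hle =>
          hEq (hcomp a (Finset.mem_insert_self a s) hle)
        obtain ⟨d, hdFa, hdFi⟩ : ∃ d, d ∈ F a ∧ d ∉ F i := by
          by_contra hcon
          push_neg at hcon
          exact hnotle fun x hx => hcon x hx
        have : ¬ ∀ r : R, c * r * d ∈ F i := by
          intro hall
          rcases hFi.2 c d hall with h | h
          · exact hc h
          · exact hdFi h
        push_neg at this
        obtain ⟨r, hr⟩ := this
        refine ⟨c * r * d, hr, fun j hj hne => ?_⟩
        rcases Finset.mem_insert.1 hj with rfl | hj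
        · exact (F j).mul_mem_left _ _ hdFa
        · exact (F j).mul_mem_right _ _ ((F j).mul_mem_right _ _ (hcs j hj hne))

lemma aux_mem_biInf {F : ℕ → TwoSidedIdeal R} {s : Finset ℕ} {x : R} :
    x ∈ (⨅ i ∈ s, F i) ↔ ∀ i ∈ s, x ∈ F i := by
  rw [TwoSidedIdeal.mem_iInf]
  refine forall_congr' fun i => ?_
  by_cases hi : i ∈ s
  · rw [iInf_pos hi]; simp [hi]
  · rw [iInf_neg hi]; simp [hi]

/-- Regularity modulo the invariant part implies regularity modulo each orbit ideal. -/
lemma aux_regular_component (σ : R ≃+* R) (P : TwoSidedIdeal R) (hP : P.IsPrime)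
    (n : ℕ) (hn : 1 ≤ n) (hPn : TwoSidedIdeal.mapEquiv (σ ^ n) P = P)
    (g : R) (hg : RegularMod (⨅ i ∈ Finset.range n, TwoSidedIdeal.mapEquiv (σ ^ i) P) g)
    (i : ℕ) (hi : i ∈ Finset.range n) :
    RegularMod (TwoSidedIdeal.mapEquiv (σ ^ i) P) g := by
  set F : ℕ → TwoSidedIdeal R := fun j => TwoSidedIdeal.mapEquiv (σ ^ j) P with hF
  have hFprime : ∀ j, (F j).IsPrime := fun j => aux_prime_mapEquiv _ hP
  have hmapd : ∀ j d : ℕ, TwoSidedIdeal.mapEquiv (σ ^ d) (F j) = F (j + d) := by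
    intro j d
    show TwoSidedIdeal.mapEquiv (σ ^ d) (TwoSidedIdeal.mapEquiv (σ ^ j) P)
      = TwoSidedIdeal.mapEquiv (σ ^ (j + d)) P
    rw [aux_mapEquiv_comp, Nat.add_comm d j]
  have hfixF : ∀ j d : ℕ, TwoSidedIdeal.mapEquiv (σ ^ (n * d)) (F j) = F j := by
    intro j d
    show TwoSidedIdeal.mapEquiv (σ ^ (n * d)) (TwoSidedIdeal.mapEquiv (σ ^ j) P)
      = TwoSidedIdeal.mapEquiv (σ ^ j) P
    rw [aux_mapEquiv_comp, Nat.add_comm (n * d) j, ← aux_mapEquiv_comp,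
      aux_fix_mul σ n P hPn d]
  have hshift : ∀ j, F (j + n) = F j := by
    intro j
    rw [← hmapd j n]
    show TwoSidedIdeal.mapEquiv (σ ^ n) (TwoSidedIdeal.mapEquiv (σ ^ j) P)
      = TwoSidedIdeal.mapEquiv (σ ^ j) P
    rw [aux_mapEquiv_comp, Nat.add_comm n j, ← aux_mapEquiv_comp, hPn]
  -- incomparability
  have hcomp : ∀ j ∈ Finset.range n, F j ≤ F i → F j = F i := by
    intro j hjmem hle
    rcases le_or_gt j i with hji | hij
    · obtain ⟨d, rfl⟩ : ∃ d, i = j + d := ⟨i - j, (Nat.add_sub_cancel' hji).symm⟩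
      have hle' : F j ≤ TwoSidedIdeal.mapEquiv (σ ^ d) (F j) := by
        rw [hmapd j d]; exact hle
      have hch := aux_chain σ d n hn (F j) (hfixF j d) hle'
      rw [hmapd j d] at hch
      exact hch.symm
    · have hji : j ≤ i + n := by
        have := Finset.mem_range.1 hjmem
        omega
      obtain ⟨d, hd⟩ : ∃ d, i + n = j + d := ⟨i + n - j, by omega⟩
      have hle2 : F j ≤ F (j + d) := by rw [← hd, hshift i]; exact hle
      have hle' : F j ≤ TwoSidedIdeal.mapEquiv (σ ^ d) (F j) := by
        rw [hmapd j d]; exact hle2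
      have hch := aux_chain σ d n hn (F j) (hfixF j d) hle'
      rw [hmapd j d] at hch
      rw [← hch, ← hd, hshift i]
  obtain ⟨c, hcFi, hc⟩ := aux_exists_elt F i (hFprime i) (Finset.range n) hcomp
  have hmem : ∀ x : R, (∀ j ∈ Finset.range n, x ∈ F j) →
      x ∈ (⨅ j ∈ Finset.range n, TwoSidedIdeal.mapEquiv (σ ^ j) P) := fun x hx =>
    aux_mem_biInf.2 hx
  have hFile : ∀ x : R,
      x ∈ (⨅ j ∈ Finset.range n, TwoSidedIdeal.mapEquiv (σ ^ j) P) → x ∈ F i := fun x hx =>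
    aux_mem_biInf.1 hx i hi
  constructor
  · -- left regularity: g * r ∈ F i → r ∈ F i
    intro r hr
    have key : ∀ x : R, r * x * c ∈ F i := by
      intro x
      have hin : g * (r * x * c)
          ∈ (⨅ j ∈ Finset.range n, TwoSidedIdeal.mapEquiv (σ ^ j) P) := by
        refine hmem _ fun j hj => ?_
        by_cases hEq : F j = F i
        · have h1 : g * r ∈ F j := hEq ▸ hr
          have h2 : g * r * (x * c) ∈ F j := (F j).mul_mem_right _ _ h1
          simpa [mul_assoc] using h2
        · exact (F j).mul_mem_left _ _ ((F j).mul_mem_left _ _ (hc j hj hEq))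
      exact hFile _ (hg.1 _ hin)
    rcases (hFprime i).2 r c key with h | h
    · exact h
    · exact absurd h hcFi
  · -- right regularity: r * g ∈ F i → r ∈ F i
    intro r hr
    have key : ∀ x : R, c * x * r ∈ F i := by
      intro x
      have hin : (c * x * r) * g
          ∈ (⨅ j ∈ Finset.range n, TwoSidedIdeal.mapEquiv (σ ^ j) P) := by
        refine hmem _ fun j hj => ?_
        by_cases hEq : F j = F i
        · have h1 : r * g ∈ F j := hEq ▸ hr
          have h2 : c * x * (r * g) ∈ F j := (F j).mul_mem_left _ _ h1
          simpa [mul_assoc] using h2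
        · exact (F j).mul_mem_right _ _
            ((F j).mul_mem_right _ _ ((F j).mul_mem_right _ _ (hc j hj hEq)))
      exact hFile _ (hg.2 _ hin)
    rcases (hFprime i).2 c r key with h | h
    · exact absurd h hcFi
    · exact h

/-- Transport of regularity along an automorphism. -/
lemma aux_regular_transport (τ : R ≃+* R) (P : TwoSidedIdeal R) (g : R)
    (hg : RegularMod (TwoSidedIdeal.mapEquiv τ P) g) :
    RegularMod P (τ.symm g) := by
  constructor
  · intro r hr
    have h1 : g * τ r ∈ TwoSidedIdeal.mapEquiv τ P := by
      rw [aux_mem_mapEquiv, map_mul]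
      simpa using hr
    have := hg.1 _ h1
    rw [aux_mem_mapEquiv] at this
    simpa using this
  · intro r hr
    have h1 : τ r * g ∈ TwoSidedIdeal.mapEquiv τ P := by
      rw [aux_mem_mapEquiv, map_mul]
      simpa using hr
    have := hg.2 _ h1
    rw [aux_mem_mapEquiv] at this
    simpa using this

end Aux

/-- for a link `Q ⇝ P` via `A` with `σⁿ(Q)=Q`, `σⁿ(P)=P`, `σⁿ(A)=A`, the
bimodule `(Q⁰ ∩ P⁰)/A⁰` is torsionfree as a right `R/P⁰`-module and as a left
`R/Q⁰`-module. -/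
theorem invariant_part_torsionfree [Ring R] [IsNoetherianRing R] [IsNoetherianRing Rᵐᵒᵖ]
    (σ : R ≃+* R) (Q P A : TwoSidedIdeal R) (hQ : Q.IsPrime) (hP : P.IsPrime)
    (h : LinkVia Q P A) (n : ℕ) (hn : 1 ≤ n)
    (hQn : TwoSidedIdeal.mapEquiv (σ ^ n) Q = Q)
    (hPn : TwoSidedIdeal.mapEquiv (σ ^ n) P = P)
    (hAn : TwoSidedIdeal.mapEquiv (σ ^ n) A = A)
    (Q0 P0 A0 : TwoSidedIdeal R)
    (hQ0 : Q0 = ⨅ i ∈ Finset.range n, TwoSidedIdeal.mapEquiv (σ ^ i) Q)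
    (hP0 : P0 = ⨅ i ∈ Finset.range n, TwoSidedIdeal.mapEquiv (σ ^ i) P)
    (hA0 : A0 = ⨅ i ∈ Finset.range n, TwoSidedIdeal.mapEquiv (σ ^ i) A) :
    ∀ f ∈ Q0 ⊓ P0, f ∉ A0 →
      (∀ g : R, RegularMod P0 g → f * g ∉ A0) ∧
      (∀ g : R, RegularMod Q0 g → g * f ∉ A0) := by
  subst hQ0 hP0 hA0
  intro f hf hfA
  rw [TwoSidedIdeal.mem_inf] at hf
  obtain ⟨hfQ, hfP⟩ := hf
  -- find i with f ∉ σⁱA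
  obtain ⟨i, hi, hfAi⟩ : ∃ i ∈ Finset.range n, f ∉ TwoSidedIdeal.mapEquiv (σ ^ i) A := by
    by_contra hcon
    push_neg at hcon
    exact hfA (aux_mem_biInf.2 hcon)
  set τ : R ≃+* R := σ ^ i with hτ
  -- transported element
  have hfQi : τ.symm f ∈ Q := aux_mem_mapEquiv.1 (aux_mem_biInf.1 hfQ i hi)
  have hfPi : τ.symm f ∈ P := aux_mem_mapEquiv.1 (aux_mem_biInf.1 hfP i hi)
  have hfAi' : τ.symm f ∉ A := fun hmem => hfAi (aux_mem_mapEquiv.2 hmem)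
  have hfQP : τ.symm f ∈ Q ⊓ P := (TwoSidedIdeal.mem_inf _).2 ⟨hfQi, hfPi⟩
  have hlink := h.2.2 (τ.symm f) hfQP hfAi'
  constructor
  · intro g hg hmul
    have hgi : RegularMod (TwoSidedIdeal.mapEquiv (σ ^ i) P) g :=
      aux_regular_component σ P hP n hn hPn g hg i hi
    have hgP : RegularMod P (τ.symm g) := aux_regular_transport τ P g hgi
    have : τ.symm f * τ.symm g ∉ A := hlink.1 _ hgP
    refine this ?_
    have hmem : f * g ∈ TwoSidedIdeal.mapEquiv (σ ^ i) A := aux_mem_biInf.1 hmul i hi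
    rw [aux_mem_mapEquiv, map_mul] at hmem
    exact hmem
  · intro g hg hmul
    have hgi : RegularMod (TwoSidedIdeal.mapEquiv (σ ^ i) Q) g :=
      aux_regular_component σ Q hQ n hn hQn g hg i hi
    have hgQ : RegularMod Q (τ.symm g) := aux_regular_transport τ Q g hgi
    have : τ.symm g * τ.symm f ∉ A := hlink.2 _ hgQ
    refine this ?_
    have hmem : g * f ∈ TwoSidedIdeal.mapEquiv (σ ^ i) A := aux_mem_biInf.1 hmul i hi
    rw [aux_mem_mapEquiv, map_mul] at hmem
    exact hmem
end

section
/- Let R be a Noetherian ring with a ring automorphism σ, and let Q and P be σ-semistable prime ideals of R such that there is a link Q ⇝ P. Let n ≥ 1 be an integer with σⁿ(Q) = Q and σⁿ(P) = P, and let Q⁰ = ⋂_{i=0}^{n-1} σⁱ(Q) and P⁰ = ⋂_{i=0}^{n-1} σⁱ(P) be the σ-invariant parts of Q and P. Then there is a link Q⁰ ⇝ P⁰; that is, there exists an ideal A⁰ of R with Q⁰·P⁰ ⊆ A⁰ ⊊ Q⁰ ∩ P⁰ such that (Q⁰ ∩ P⁰)/A⁰ is torsionfree as a right R/P⁰-module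 and as a left R/Q⁰-module. -/
/-!
Each translate `σⁱ(A)` links `σⁱ(Q)` to `σⁱ(P)`, and `A⁰ = ⋂ σⁱ(A)` links `Q⁰` to `P⁰`.
Two facts about a prime `T` with `σⁿ(T) = T` make this work. Its translates are pairwise
incomparable, so by primeness every translate `J` has an ideal `W ⊄ J` with `W ∩ J ⊆ T⁰`; hence
an element regular modulo `T⁰` is regular modulo every translate, and torsionfreeness passes to
the intersection. And by Goldie's theorem for the prime Noetherian ring `R/T`, such a `W`
contains an element regular modulo `T`: multiplying `f ∈ (Q ∩ P) ∖ A` on the left and on the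
right by these elements for `Q` and for `P` gives an element of `Q⁰ ∩ P⁰` outside `A`, so
`A⁰ ⊊ Q⁰ ∩ P⁰`.
-/
variable {R : Type*}

theorem Function.IsPeriodicPt.eq_of_apply_le {α : Type*} [PartialOrder α] {f : α → α} {n : ℕ}
    {x : α} (hx : Function.IsPeriodicPt f n x) (hf : Monotone f) (hn : 0 < n) (h : f x ≤ x) :
    f x = x := by
  have : f^[n] x ≤ f^[1] x := hf.antitone_iterate_of_map_le h hn
  rw [hx.eq] at this
  exact le_antisymm h this

theorem Function.IsPeriodicPt.iterate_eq_of_le {α : Type*} [PartialOrder α] {f : α → α} {n : ℕ}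
    {x : α} (hx : Function.IsPeriodicPt f n x) (hf : Monotone f) (hn : 0 < n) {i j : ℕ}
    (h : f^[i] x ≤ f^[j] x) : f^[i] x = f^[j] x := by
  have hindex : i + (n - 1) * j + j = i + j * n := by
    cases n with
    | zero => omega
    | succ m => rw [Nat.add_sub_cancel]; ring
  have hshift : f^[i + (n - 1) * j] (f^[j] x) = f^[i] x := by
    rw [← Function.iterate_add_apply, hindex, Function.iterate_add_apply, (hx.const_mul j).eq]
  rw [← hshift] at h ⊢
  exact ((hx.apply_iterate j).iterate _).eq_of_apply_le (hf.iterate _) hn h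

namespace TwoSidedIdeal

variable [Ring R]

theorem mem_mapEquiv {φ : R ≃+* R} {I : TwoSidedIdeal R} {x : R} :
    x ∈ I.mapEquiv φ ↔ φ.symm x ∈ I :=
  mem_comap _

@[simp]
theorem mapEquiv_one (I : TwoSidedIdeal R) : I.mapEquiv 1 = I := by
  ext; exact Iff.rfl

theorem mapEquiv_mul (φ ψ : R ≃+* R) (I : TwoSidedIdeal R) :
    I.mapEquiv (φ * ψ) = (I.mapEquiv ψ).mapEquiv φ := by
  ext; exact Iff.rfl

theorem mapEquiv_pow (σ : R ≃+* R) (i : ℕ) : mapEquiv (σ ^ i) = (mapEquiv σ)^[i] := by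
  induction i with
  | zero => funext I; simp
  | succ i ih => funext I; rw [pow_succ, mapEquiv_mul, ih, Function.iterate_succ_apply]

theorem mapEquiv_monotone (φ : R ≃+* R) : Monotone (mapEquiv φ) :=
  (comap (φ.symm : R ≃+* R)).monotone

theorem mapEquiv_strictMono (φ : R ≃+* R) : StrictMono (mapEquiv φ) :=
  φ.mapTwoSidedIdeal.strictMono

theorem mapEquiv_inf (φ : R ≃+* R) (I J : TwoSidedIdeal R) :
    (I ⊓ J).mapEquiv φ = I.mapEquiv φ ⊓ J.mapEquiv φ :=
  φ.mapTwoSidedIdeal.map_inf I J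

theorem IsPrime.mapEquiv {T : TwoSidedIdeal R} (hT : T.IsPrime) (φ : R ≃+* R) :
    (T.mapEquiv φ).IsPrime := by
  refine ⟨fun htop => hT.1 (T.eq_top ?_), fun a b hab => ?_⟩
  · have h1 : (1 : R) ∈ T.mapEquiv φ := htop ▸ mem_top R
    simpa [mem_mapEquiv] using h1
  · simp only [mem_mapEquiv]
    refine hT.2 _ _ fun r => ?_
    simpa [mem_mapEquiv] using hab (φ r)

end TwoSidedIdeal

open TwoSidedIdeal

theorem RegularMod.of_mapEquiv [Ring R] {φ : R ≃+* R} {T : TwoSidedIdeal R} {g : R}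
    (hg : RegularMod (T.mapEquiv φ) g) : RegularMod T (φ.symm g) := by
  constructor <;> intro r hr
  · simpa [mem_mapEquiv] using hg.1 (φ r) (by simpa [mem_mapEquiv] using hr)
  · simpa [mem_mapEquiv] using hg.2 (φ r) (by simpa [mem_mapEquiv] using hr)

theorem LinkVia.mapEquiv [Ring R] {Q P A : TwoSidedIdeal R} (h : LinkVia Q P A) (φ : R ≃+* R) :
    LinkVia (Q.mapEquiv φ) (P.mapEquiv φ) (A.mapEquiv φ) := by
  refine ⟨fun q hq p hp => ?_, ?_, fun f hf hfA => ⟨fun g hg hmem => ?_, fun g hg hmem => ?_⟩⟩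
  · rw [mem_mapEquiv] at hq hp ⊢
    simpa using h.1 _ hq _ hp
  · rw [← mapEquiv_inf]
    exact mapEquiv_strictMono φ h.2.1
  all_goals
    rw [← mapEquiv_inf, mem_mapEquiv] at hf
    rw [mem_mapEquiv] at hfA
    rw [mem_mapEquiv, map_mul] at hmem
  · exact (h.2.2 _ hf hfA).1 _ hg.of_mapEquiv hmem
  · exact (h.2.2 _ hf hfA).2 _ hg.of_mapEquiv hmem

namespace TwoSidedIdeal

variable [Ring R]

theorem mem_biInf {ι : Type*} {s : Finset ι} {T : ι → TwoSidedIdeal R} {x : R} :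
    x ∈ ⨅ i ∈ s, T i ↔ ∀ i ∈ s, x ∈ T i := by
  rw [mem_iInf]
  refine forall_congr' fun i => ?_
  by_cases hi : i ∈ s <;> simp [hi]

variable {J : TwoSidedIdeal R}

theorem IsPrime.le_or_le_of_inf_le (hJ : J.IsPrime) {I K : TwoSidedIdeal R} (h : I ⊓ K ≤ J) :
    I ≤ J ∨ K ≤ J := by
  by_contra! hIK
  obtain ⟨x, hxI, hxJ⟩ := SetLike.not_le_iff_exists.1 hIK.1
  obtain ⟨y, hyK, hyJ⟩ := SetLike.not_le_iff_exists.1 hIK.2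
  have hxy : ∀ r, x * r * y ∈ J := fun r =>
    h ((mem_inf _).2 ⟨I.mul_mem_right _ _ (I.mul_mem_right _ _ hxI), K.mul_mem_left _ _ hyK⟩)
  exact (hJ.2 x y hxy).elim hxJ hyJ

theorem IsPrime.exists_le_of_biInf_le {ι : Type*} (hJ : J.IsPrime) (s : Finset ι)
    (T : ι → TwoSidedIdeal R) (h : ⨅ i ∈ s, T i ≤ J) : ∃ i ∈ s, T i ≤ J := by
  classical
  induction s using Finset.induction_on with
  | empty => exact absurd (top_le_iff.1 (by simpa using h)) hJ.1
  | insert a s _ ih =>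
    rw [Finset.iInf_insert] at h
    rcases hJ.le_or_le_of_inf_le h with h | h
    · exact ⟨a, Finset.mem_insert_self a s, h⟩
    · obtain ⟨i, hi, hiJ⟩ := ih h
      exact ⟨i, Finset.mem_insert_of_mem hi, hiJ⟩

variable (σ : R ≃+* R) {T : TwoSidedIdeal R} {n : ℕ}

theorem mapEquiv_pow_eq_of_le (hTn : T.mapEquiv (σ ^ n) = T) (hn : 0 < n) {i j : ℕ}
    (h : T.mapEquiv (σ ^ i) ≤ T.mapEquiv (σ ^ j)) : T.mapEquiv (σ ^ i) = T.mapEquiv (σ ^ j) := by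
  simp only [mapEquiv_pow] at hTn h ⊢
  exact Function.IsPeriodicPt.iterate_eq_of_le hTn (mapEquiv_monotone σ) hn h

theorem exists_not_le_inf_le_biInf (hT : T.IsPrime) (hTn : T.mapEquiv (σ ^ n) = T) (hn : 0 < n)
    (j : ℕ) : ∃ W : TwoSidedIdeal R, ¬ W ≤ T.mapEquiv (σ ^ j) ∧
      W ⊓ T.mapEquiv (σ ^ j) ≤ ⨅ i ∈ Finset.range n, T.mapEquiv (σ ^ i) := by
  classical
  refine ⟨⨅ i ∈ (Finset.range n).filter (fun i => T.mapEquiv (σ ^ i) ≠ T.mapEquiv (σ ^ j)),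
    T.mapEquiv (σ ^ i), fun hle => ?_, le_iInf₂ fun i hi => ?_⟩
  · obtain ⟨i, hi, hij⟩ := (hT.mapEquiv _).exists_le_of_biInf_le _ _ hle
    exact (Finset.mem_filter.1 hi).2 (mapEquiv_pow_eq_of_le σ hTn hn hij)
  · by_cases hij : T.mapEquiv (σ ^ i) = T.mapEquiv (σ ^ j)
    · exact hij ▸ inf_le_right
    · exact inf_le_left.trans (biInf_le _ (Finset.mem_filter.2 ⟨hi, hij⟩))

end TwoSidedIdeal

theorem RegularMod.of_inf_le [Ring R] {I J W : TwoSidedIdeal R} {g : R} (hg : RegularMod I g)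
    (hJ : J.IsPrime) (hIJ : I ≤ J) (hW : ¬ W ≤ J) (hWJ : W ⊓ J ≤ I) : RegularMod J g := by
  obtain ⟨x, hxW, hxJ⟩ := SetLike.not_le_iff_exists.1 hW
  constructor <;> intro r hr
  · refine (hJ.2 r x fun y => hIJ (hg.1 _ (hWJ ((mem_inf _).2 ⟨?_, ?_⟩)))).resolve_right hxJ
    · simpa [mul_assoc] using W.mul_mem_left (g * r * y) _ hxW
    · simpa [mul_assoc] using J.mul_mem_right _ (y * x) hr
  · refine (hJ.2 x r fun y => hIJ (hg.2 _ (hWJ ((mem_inf _).2 ⟨?_, ?_⟩)))).resolve_left hxJ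
    · simpa [mul_assoc] using W.mul_mem_right _ (y * r * g) hxW
    · simpa [mul_assoc] using J.mul_mem_left (x * y) _ hr

theorem RegularMod.mapEquiv_pow_of_biInf [Ring R] (σ : R ≃+* R) {T : TwoSidedIdeal R} {n j : ℕ}
    {g : R} (hg : RegularMod (⨅ i ∈ Finset.range n, T.mapEquiv (σ ^ i)) g) (hT : T.IsPrime)
    (hTn : T.mapEquiv (σ ^ n) = T) (hj : j ∈ Finset.range n) :
    RegularMod (T.mapEquiv (σ ^ j)) g := by
  obtain ⟨W, hW, hWJ⟩ :=
    exists_not_le_inf_le_biInf σ hT hTn (Nat.zero_lt_of_lt (Finset.mem_range.1 hj)) j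
  exact hg.of_inf_le (hT.mapEquiv _) (biInf_le _ hj) hW hWJ

namespace TwoSidedIdeal

variable [Ring R] {Q : TwoSidedIdeal R}

def leftAnnMod (Q : TwoSidedIdeal R) (x : R) : Ideal R :=
  Submodule.comap (LinearMap.toSpanSingleton R R x) Q.asIdeal

theorem mem_leftAnnMod {x y : R} : y ∈ Q.leftAnnMod x ↔ y * x ∈ Q := by
  simp [leftAnnMod]

theorem exists_leftAnnMod_maximal [IsNoetherianRing R] {S : Set R} (hS : S.Nonempty) :
    ∃ a ∈ S, ∀ x y, a * x ∈ S → y * (a * x) ∈ Q → y * a ∈ Q := by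
  obtain ⟨_, ⟨a, ha, rfl⟩, hmax⟩ :=
    set_has_maximal_iff_noetherian.2 inferInstance (Q.leftAnnMod '' S) (hS.image _)
  refine ⟨a, ha, fun x y hxa hy => ?_⟩
  have hle : Q.leftAnnMod a ≤ Q.leftAnnMod (a * x) := fun z hz => by
    rw [mem_leftAnnMod, ← mul_assoc]
    exact Q.mul_mem_right _ _ (mem_leftAnnMod.1 hz)
  rwa [← mem_leftAnnMod, eq_of_le_of_not_lt hle (hmax _ ⟨_, hxa, rfl⟩), mem_leftAnnMod]

theorem IsPrime.exists_forall_pow_not_mem [IsNoetherianRing R] (hQ : Q.IsPrime) {K : Ideal R}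
    (hK : ∃ x ∈ K, x ∉ Q) : ∃ a ∈ K, ∀ m : ℕ, a ^ m ∉ Q := by
  classical
  by_contra! hnil
  obtain ⟨a, ⟨haK, haQ⟩, hmax⟩ :=
    exists_leftAnnMod_maximal (Q := Q) (S := {x | x ∈ K ∧ x ∉ Q}) hK
  -- `a ∈ K ∖ Q` has a maximal left annihilator; nilpotency of `ra` then forces `aRa ⊆ Q`.
  refine haQ ((hQ.2 a a fun r => ?_).elim id id)
  by_contra hara
  have hex : ∃ k, a * (r * a) ^ k ∈ Q :=
    (hnil _ (K.mul_mem_left r haK)).imp fun m hm => Q.mul_mem_left a _ hm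
  obtain ⟨j, hj⟩ : ∃ j, Nat.find hex = j + 1 :=
    Nat.exists_eq_succ_of_ne_zero fun h0 => haQ (by simpa [h0] using Nat.find_spec hex)
  have hd : a * (r * a) ^ j ∈ {x | x ∈ K ∧ x ∉ Q} :=
    ⟨by rw [← mul_pow_mul]; exact K.mul_mem_left _ haK, Nat.find_min hex (by omega)⟩
  refine hara (hmax _ (a * r) hd ?_)
  have hsucc := Nat.find_spec hex
  rw [hj, pow_succ'] at hsucc
  simpa [mul_assoc] using hsucc

/-- A substitute for an idempotent modulo `Q` in Goldie's construction of a large direct sum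
of left ideals. -/
def IsAnnStable (Q : TwoSidedIdeal R) (e : R) : Prop :=
  e * e ∉ Q ∧ ∀ y, y * (e * e) ∈ Q → y * e ∈ Q

theorem exists_isAnnStable_pow [IsNoetherianRing R] {a : R} (ha : ∀ m : ℕ, a ^ m ∉ Q) :
    ∃ k, Q.IsAnnStable (a ^ (k + 1)) := by
  let f : ℕ →o Ideal R := ⟨fun k => Q.leftAnnMod (a ^ (k + 1)), monotone_nat_of_le_succ
    fun k y hy => by
      rw [mem_leftAnnMod, pow_succ _ (k + 1), ← mul_assoc]
      exact Q.mul_mem_right _ _ (mem_leftAnnMod.1 hy)⟩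
  obtain ⟨N, hN⟩ := monotone_stabilizes_iff_noetherian.2 inferInstance f
  refine ⟨N, by rw [← pow_add]; exact ha _, fun y hy => ?_⟩
  have hy' : y ∈ f (2 * N + 1) := by
    rw [← pow_add, show N + 1 + (N + 1) = 2 * N + 1 + 1 by ring] at hy
    exact mem_leftAnnMod.2 hy
  exact mem_leftAnnMod.1 ((hN (2 * N + 1) (by omega)).symm ▸ hy' : y ∈ f N)

theorem IsPrime.exists_isAnnStable_mem [IsNoetherianRing R] (hQ : Q.IsPrime) {K : Ideal R}
    (hK : ∃ x ∈ K, x ∉ Q) : ∃ e ∈ K, Q.IsAnnStable e := by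
  obtain ⟨a, haK, ha⟩ := hQ.exists_forall_pow_not_mem hK
  obtain ⟨k, hk⟩ := exists_isAnnStable_pow ha
  exact ⟨_, by rw [pow_succ]; exact K.mul_mem_left _ haK, hk⟩

theorem mul_mem_of_mul_sum_mem {L : List R} (hL : ∀ e ∈ L, Q.IsAnnStable e)
    (hpair : L.Pairwise fun x y => y * x ∈ Q) {x : R} (hx : x * L.sum ∈ Q) :
    ∀ e ∈ L, x * e ∈ Q := by
  induction L with
  | nil => simp
  | cons a L ih =>
    rw [List.pairwise_cons] at hpair
    have hLa : L.sum * a ∈ Q := by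
      simpa [List.sum_map_mul_right] using Q.listSum_mem L (· * a) hpair.1
    have hxa : x * a ∈ Q := by
      refine (hL a List.mem_cons_self).2 x ?_
      have := Q.sub_mem (Q.mul_mem_right _ a hx) (Q.mul_mem_left x _ hLa)
      rwa [List.sum_cons, show x * (a + L.sum) * a - x * (L.sum * a) = x * (a * a) by
        noncomm_ring] at this
    have hxL : x * L.sum ∈ Q := by
      simpa [mul_add] using Q.sub_mem hx hxa
    intro e he
    rcases List.mem_cons.1 he with rfl | he
    · exact hxa
    · exact ih (fun e he => hL e (List.mem_cons_of_mem _ he)) hpair.2 hxL e he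

def rightAnnLeftAnnMod (Q : TwoSidedIdeal R) (L : List R) : Ideal Rᵐᵒᵖ where
  carrier := {y | ∀ x : R, (∀ a ∈ L, x * a ∈ Q) → x * y.unop ∈ Q}
  add_mem' hu hv x hx := by simpa [mul_add] using Q.add_mem (hu x hx) (hv x hx)
  zero_mem' x _ := by simp
  smul_mem' c y hy x hx := by simpa [mul_assoc] using Q.mul_mem_right _ c.unop (hy x hx)

theorem mem_of_mul_pow_sub_sum_mem {c z : R} (hc : ∀ x, x * c ∈ Q → x ∈ Q)
    (hdisj : ∀ w t, w * z - t * c ∈ Q → w * z ∈ Q) (N : ℕ) (w : ℕ → R)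
    (h : z * c ^ N - ∑ i ∈ Finset.range N, w i * z * c ^ i ∈ Q) : z ∈ Q := by
  induction N generalizing w with
  | zero => simpa using h
  | succ N ih =>
    set u := z * c ^ N - ∑ i ∈ Finset.range N, w (i + 1) * z * c ^ i
    have hsplit : z * c ^ (N + 1) - ∑ i ∈ Finset.range (N + 1), w i * z * c ^ i =
        u * c - w 0 * z := by
      simp only [u, Finset.sum_range_succ', sub_mul, Finset.sum_mul, pow_succ, pow_zero, mul_one,
        mul_assoc]
      abel
    rw [hsplit] at h
    have h0 : w 0 * z ∈ Q := hdisj (w 0) u (by simpa using Q.neg_mem h)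
    exact ih (fun i => w (i + 1)) (hc u (by simpa using Q.add_mem h h0))

theorem exists_mul_not_mem_sub_mul_mem [IsNoetherianRing R] {c z : R}
    (hc : ∀ x, x * c ∈ Q → x ∈ Q) (hz : z ∉ Q) : ∃ w t : R, w * z ∉ Q ∧ w * z - t * c ∈ Q := by
  -- Otherwise `Rz + Rzc + Rzc² + ⋯` is direct modulo `Q`, which the ascending chain condition
  -- forbids.
  by_contra! hdisj
  let E : ℕ →o Ideal R := ⟨fun n => Q.asIdeal ⊔ ⨆ i ∈ Finset.range n, R ∙ (z * c ^ i),
    fun m n hmn => sup_le_sup_left (biSup_mono fun i hi => Finset.range_mono hmn hi) _⟩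
  obtain ⟨N, hN⟩ := monotone_stabilizes_iff_noetherian.2 inferInstance E
  have hmem : z * c ^ N ∈ E N := by
    rw [hN (N + 1) (Nat.le_succ N)]
    exact Submodule.mem_sup_right (Submodule.mem_iSup_of_mem N (Submodule.mem_iSup_of_mem
      (Finset.self_mem_range_succ N) (Submodule.mem_span_singleton_self _)))
  obtain ⟨q, hq, s, hs, hqs⟩ := Submodule.mem_sup.1 hmem
  obtain ⟨μ, hμ⟩ := (Submodule.mem_iSup_finset_iff_exists_sum _ _).1 hs
  choose w hw using fun i => Submodule.mem_span_singleton.1 (μ i).2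
  refine hz (mem_of_mul_pow_sub_sum_mem hc (fun w t h => not_not.1 fun hw => hdisj w t hw h)
    N w ?_)
  rw [← hqs, ← hμ]
  simpa [← hw, mul_assoc] using hq

theorem IsPrime.mem_of_forall_exists_mul_mem [IsNoetherianRing R] (hQ : Q.IsPrime) {x : R}
    (hx : ∀ z, z ∉ Q → ∃ w, w * z ∉ Q ∧ w * z * x ∈ Q) : x ∈ Q := by
  by_contra hxQ
  obtain ⟨a, ⟨haQ, ha⟩, hmax⟩ := exists_leftAnnMod_maximal (Q := Q)
    (S := {a | a ∉ Q ∧ ∀ z, z ∉ Q → ∃ w, w * z ∉ Q ∧ w * z * a ∈ Q}) ⟨x, hxQ, hx⟩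
  refine haQ ((hQ.2 a a fun r => ?_).elim id id)
  by_contra hara
  obtain ⟨w, hw, hwa⟩ := ha (a * r) fun h => hara (Q.mul_mem_right _ _ h)
  have hS : a * (r * a) ∉ Q ∧ ∀ z, z ∉ Q → ∃ w, w * z ∉ Q ∧ w * z * (a * (r * a)) ∈ Q :=
    ⟨by rwa [← mul_assoc], fun z hz => (ha z hz).imp fun w hw =>
      ⟨hw.1, by simpa [mul_assoc] using Q.mul_mem_right _ (r * a) hw.2⟩⟩
  have hwa' : w * a ∈ Q := hmax (r * a) w hS (by simpa [mul_assoc] using hwa)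
  exact hw (by simpa [mul_assoc] using Q.mul_mem_right _ r hwa')

theorem IsPrime.regularMod_of_forall_mul_mem [IsNoetherianRing R] (hQ : Q.IsPrime) {c : R}
    (hc : ∀ x, x * c ∈ Q → x ∈ Q) : RegularMod Q c := by
  refine ⟨fun x hx => hQ.mem_of_forall_exists_mul_mem fun z hz => ?_, hc⟩
  obtain ⟨w, t, hwz, hsub⟩ := exists_mul_not_mem_sub_mul_mem hc hz
  refine ⟨w, hwz, ?_⟩
  have := Q.add_mem (Q.mul_mem_right _ x hsub) (Q.mul_mem_left t _ hx)
  rwa [show (w * z - t * c) * x + t * (c * x) = w * z * x by noncomm_ring] at this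

theorem IsPrime.exists_list_forall_mul_mem_imp_mem [IsNoetherianRing R] [IsNoetherianRing Rᵐᵒᵖ]
    (hQ : Q.IsPrime) {V : TwoSidedIdeal R} (hV : ¬ V ≤ Q) :
    ∃ L : List R, ((∀ e ∈ L, e ∈ V ∧ Q.IsAnnStable e) ∧ L.Pairwise fun x y => y * x ∈ Q) ∧
      ∀ x, (∀ e ∈ L, x * e ∈ Q) → x ∈ Q := by
  -- Take `L` with maximal right annihilator of its left annihilator; if its left annihilator
  -- leaves `Q`, it meets `V` in a left ideal providing a new `e`, and `op e` enlarges that ideal.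
  obtain ⟨_, ⟨L, hL, rfl⟩, hmax⟩ := set_has_maximal_iff_noetherian.2 inferInstance
    {I : Ideal Rᵐᵒᵖ | ∃ L : List R, ((∀ e ∈ L, e ∈ V ∧ Q.IsAnnStable e) ∧
      L.Pairwise fun x y => y * x ∈ Q) ∧ Q.rightAnnLeftAnnMod L = I}
    ⟨_, [], ⟨by simp, .nil⟩, rfl⟩
  refine ⟨L, hL, fun j hj => ?_⟩
  by_contra hjQ
  obtain ⟨v, hvV, hvQ⟩ := SetLike.not_le_iff_exists.1 hV
  obtain ⟨r, hr⟩ : ∃ r, v * r * j ∉ Q := by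
    by_contra! h
    exact (hQ.2 v j h).elim hvQ hjQ
  let K : Ideal R := V.asIdeal ⊓ ⨅ a ∈ L, Q.leftAnnMod a
  have hmemK : ∀ x, x ∈ K ↔ x ∈ V ∧ ∀ a ∈ L, x * a ∈ Q := by
    simp [K, mem_leftAnnMod]
  have hvrjK : v * r * j ∈ K := (hmemK _).2 ⟨V.mul_mem_right _ _ (V.mul_mem_right _ _ hvV),
    fun a ha => by rw [mul_assoc]; exact Q.mul_mem_left _ _ (hj a ha)⟩
  obtain ⟨e, heK, he⟩ := hQ.exists_isAnnStable_mem ⟨_, hvrjK, hr⟩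
  rw [hmemK] at heK
  have hle : Q.rightAnnLeftAnnMod L ≤ Q.rightAnnLeftAnnMod (L ++ [e]) := fun y hy x hx =>
    hy x fun a ha => hx a (List.mem_append_left _ ha)
  have he_mem : MulOpposite.op e ∈ Q.rightAnnLeftAnnMod (L ++ [e]) := fun x hx => hx e (by simp)
  have he_not : MulOpposite.op e ∉ Q.rightAnnLeftAnnMod L := fun h => he.1 (h e heK.2)
  refine hmax _ ⟨L ++ [e], ⟨fun a ha => ?_, ?_⟩, rfl⟩
    (lt_of_le_of_ne hle fun h => he_not (h ▸ he_mem))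
  · rcases List.mem_append.1 ha with ha | ha
    · exact hL.1 a ha
    · exact List.mem_singleton.1 ha ▸ ⟨heK.1, he⟩
  · exact List.pairwise_append.2 ⟨hL.2, List.pairwise_singleton _ _,
      fun x hx y hy => List.mem_singleton.1 hy ▸ heK.2 x hx⟩

theorem IsPrime.exists_regularMod [IsNoetherianRing R] [IsNoetherianRing Rᵐᵒᵖ]
    (hQ : Q.IsPrime) {V : TwoSidedIdeal R} (hV : ¬ V ≤ Q) : ∃ g ∈ V, RegularMod Q g := by
  obtain ⟨L, ⟨hLV, hpair⟩, hL⟩ := hQ.exists_list_forall_mul_mem_imp_mem hV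
  refine ⟨L.sum, by simpa using V.listSum_mem L id fun e he => (hLV e he).1,
    hQ.regularMod_of_forall_mul_mem fun x hx => hL x ?_⟩
  exact mul_mem_of_mul_sum_mem (fun e he => (hLV e he).2) hpair hx

end TwoSidedIdeal

theorem linkVia_biInf [Ring R] {ι : Type*} (s : Finset ι) {Q P A : ι → TwoSidedIdeal R}
    (hlink : ∀ i ∈ s, LinkVia (Q i) (P i) (A i))
    (hQ : ∀ g, RegularMod (⨅ i ∈ s, Q i) g → ∀ i ∈ s, RegularMod (Q i) g)
    (hP : ∀ g, RegularMod (⨅ i ∈ s, P i) g → ∀ i ∈ s, RegularMod (P i) g)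
    (hA : ∃ f ∈ (⨅ i ∈ s, Q i) ⊓ ⨅ i ∈ s, P i, f ∉ ⨅ i ∈ s, A i) :
    LinkVia (⨅ i ∈ s, Q i) (⨅ i ∈ s, P i) (⨅ i ∈ s, A i) := by
  have hle : ⨅ i ∈ s, A i ≤ (⨅ i ∈ s, Q i) ⊓ ⨅ i ∈ s, P i :=
    le_inf (iInf₂_mono fun i hi => (hlink i hi).2.1.le.trans inf_le_left)
      (iInf₂_mono fun i hi => (hlink i hi).2.1.le.trans inf_le_right)
  obtain ⟨f, hf, hfA⟩ := hA
  refine ⟨fun q hq p hp => ?_, lt_of_le_of_ne hle fun h => hfA (h ▸ hf),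
    fun f hf hfA => ?_⟩
  · rw [mem_biInf] at hq hp ⊢
    exact fun i hi => (hlink i hi).1 q (hq i hi) p (hp i hi)
  · obtain ⟨i, hi, hfi⟩ : ∃ i ∈ s, f ∉ A i := by
      by_contra! h
      exact hfA (mem_biInf.2 h)
    have hfQP : f ∈ Q i ⊓ P i :=
      (mem_inf _).2 ⟨mem_biInf.1 ((mem_inf _).1 hf).1 i hi, mem_biInf.1 ((mem_inf _).1 hf).2 i hi⟩
    have htf := (hlink i hi).2.2 f hfQP hfi
    exact ⟨fun g hg hmem => htf.1 g (hP g hg i hi) (mem_biInf.1 hmem i hi),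
      fun g hg hmem => htf.2 g (hQ g hg i hi) (mem_biInf.1 hmem i hi)⟩

theorem LinkVia.exists_mem_biInf_not_mem [Ring R] [IsNoetherianRing R] [IsNoetherianRing Rᵐᵒᵖ]
    {Q P A : TwoSidedIdeal R} (hA : LinkVia Q P A) (hQ : Q.IsPrime) (hP : P.IsPrime)
    (σ : R ≃+* R) {n : ℕ} (hn : 0 < n) (hQn : Q.mapEquiv (σ ^ n) = Q)
    (hPn : P.mapEquiv (σ ^ n) = P) :
    ∃ f ∈ (⨅ i ∈ Finset.range n, Q.mapEquiv (σ ^ i)) ⊓ ⨅ i ∈ Finset.range n, P.mapEquiv (σ ^ i),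
      f ∉ A := by
  obtain ⟨f, hf, hfA⟩ := SetLike.exists_of_lt hA.2.1
  obtain ⟨WQ, hWQ, hWQ0⟩ := exists_not_le_inf_le_biInf σ hQ hQn hn 0
  obtain ⟨WP, hWP, hWP0⟩ := exists_not_le_inf_le_biInf σ hP hPn hn 0
  simp only [pow_zero, mapEquiv_one] at hWQ hWQ0 hWP hWP0
  obtain ⟨g, hgW, hg⟩ := hQ.exists_regularMod hWQ
  obtain ⟨h, hhW, hh⟩ := hP.exists_regularMod hWP
  have hfQP := (mem_inf _).1 hf
  have hgf : g * f ∉ A := (hA.2.2 f hf hfA).2 g hg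
  refine ⟨g * f * h, (mem_inf _).2 ⟨hWQ0 ((mem_inf _).2 ⟨?_, ?_⟩), hWP0 ((mem_inf _).2 ⟨?_, ?_⟩)⟩,
    (hA.2.2 _ ((mem_inf _).2 ⟨Q.mul_mem_left _ _ hfQP.1, P.mul_mem_left _ _ hfQP.2⟩) hgf).1 h hh⟩
  · exact WQ.mul_mem_right _ _ (WQ.mul_mem_right _ _ hgW)
  · exact Q.mul_mem_right _ _ (Q.mul_mem_left _ _ hfQP.1)
  · exact WP.mul_mem_left _ _ hhW
  · exact P.mul_mem_right _ _ (P.mul_mem_left _ _ hfQP.2)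

/-- main theorem: a link `Q ⇝ P` of σ-semistable prime ideals of a Noetherian
ring induces a link `Q⁰ ⇝ P⁰` of their σ-invariant parts. -/
theorem link_induces_link_of_invariant_parts [Ring R] [IsNoetherianRing R]
    [IsNoetherianRing Rᵐᵒᵖ] (σ : R ≃+* R) (Q P : TwoSidedIdeal R)
    (hQ : Q.IsPrime) (hP : P.IsPrime)
    (hlink : ∃ A : TwoSidedIdeal R, LinkVia Q P A)
    (n : ℕ) (hn : 1 ≤ n)
    (hQn : TwoSidedIdeal.mapEquiv (σ ^ n) Q = Q)
    (hPn : TwoSidedIdeal.mapEquiv (σ ^ n) P = P)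
    (Q0 P0 : TwoSidedIdeal R)
    (hQ0 : Q0 = ⨅ i ∈ Finset.range n, TwoSidedIdeal.mapEquiv (σ ^ i) Q)
    (hP0 : P0 = ⨅ i ∈ Finset.range n, TwoSidedIdeal.mapEquiv (σ ^ i) P) :
    ∃ A0 : TwoSidedIdeal R, LinkVia Q0 P0 A0 := by
  obtain ⟨A, hA⟩ := hlink
  subst hQ0 hP0
  obtain ⟨f, hf, hfA⟩ := hA.exists_mem_biInf_not_mem hQ hP σ hn hQn hPn
  have hfA0 : f ∉ ⨅ i ∈ Finset.range n, A.mapEquiv (σ ^ i) := fun hmem =>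
    hfA (by simpa using mem_biInf.1 hmem 0 (Finset.mem_range.2 hn))
  exact ⟨_, linkVia_biInf _ (fun i _ => hA.mapEquiv _)
    (fun g hg i hi => hg.mapEquiv_pow_of_biInf σ hQ hQn hi)
    (fun g hg i hi => hg.mapEquiv_pow_of_biInf σ hP hPn hi) ⟨f, hf, hfA0⟩⟩
end
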